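/- arXiv:1903.11578 — 7 statements merged into one kernel-verified Lean document; each statement's English description precedes it below -/
import Mathlib

section
/- For every commutative ring R, every family w : ℤ → R, every integer j ≥ 0 and every n ∈ ℤ, the identity m_{j,-2}(n) = w_n w_{n-1} m_{j,2}(n-2) holds. -/
/-- Coefficients `m_{j,k}(n)` of the powers `L^j = Σ_k m_{j,k}(n) Λ^k` of the
difference operator `L = Λ² + (w_{n+1} + w_n) + w_n w_{n-1} Λ⁻²`,
defined by the recursion from the context (natural-number power index). -/
def mAux {R : Type*} [CommRing R] (w : ℤ → R) : ℕ → ℤ → ℤ → R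
  | 0, k, _ => if k = 0 then 1 else 0
  | j + 1, k, n =>
      mAux w j (k - 2) n + (w (n + k + 1) + w (n + k)) * mAux w j k n +
        w (n + k + 2) * w (n + k + 1) * mAux w j (k + 2) n

/-- `mCoef w j k n` is `m_{j,k}(n)` for an integer `j` (meaningful for `j ≥ 0`). -/
def mCoef {R : Type*} [CommRing R] (w : ℤ → R) (j k n : ℤ) : R := mAux w j.toNat k n

lemma mAux_succ {R : Type*} [CommRing R] (w : ℤ → R) (j : ℕ) (k n : ℤ) :
    mAux w (j + 1) k n =
      mAux w j (k - 2) n + (w (n + k + 1) + w (n + k)) * mAux w j k n +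
        w (n + k + 2) * w (n + k + 1) * mAux w j (k + 2) n := rfl

lemma mAux_zero {R : Type*} [CommRing R] (w : ℤ → R) (k n : ℤ) :
    mAux w 0 k n = if k = 0 then 1 else 0 := rfl

/-- The "left" recursion, expressing `L · L^j = L^j · L`. -/
lemma mAux_left_rec {R : Type*} [CommRing R] (w : ℤ → R) (j : ℕ) (k n : ℤ) :
    mAux w (j + 1) k n =
      mAux w j (k - 2) (n + 2) + (w (n + 1) + w n) * mAux w j k n +
        w n * w (n - 1) * mAux w j (k + 2) (n - 2) := by
  induction j generalizing k n with
  | zero =>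
      simp only [mAux_succ, mAux_zero]
      by_cases h0 : k = 0
      · subst h0; norm_num
      by_cases h2 : k = 2
      · subst h2; norm_num
      by_cases hm : k = -2
      · subst hm
        simp [show (-2:ℤ) - 2 ≠ 0 by norm_num, show (-2:ℤ) ≠ 0 by norm_num,
          show n + -2 + 2 = n by ring, show n + -2 + 1 = n - 1 by ring]
      · simp [h0, show k - 2 ≠ 0 by omega, show k + 2 ≠ 0 by omega]
  | succ j ih =>
      conv_rhs => rw [mAux_succ w j (k - 2) (n + 2), mAux_succ w j k n,
        mAux_succ w j (k + 2) (n - 2)]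
      rw [show j + 1 + 1 = (j + 1) + 1 from rfl, mAux_succ w (j + 1) k n,
        ih (k - 2) n, ih k n, ih (k + 2) n]
      ring_nf

/-- `prodW w n t = ∏_{i=1}^{2t} w (n+i)`. -/
def prodW {R : Type*} [CommRing R] (w : ℤ → R) (n : ℤ) : ℕ → R
  | 0 => 1
  | t + 1 => prodW w n t * (w (n + 2 * t + 1) * w (n + 2 * t + 2))

/-- Symmetry of `L^j` with respect to the weight `ρ`. -/
lemma mAux_symm {R : Type*} [CommRing R] (w : ℤ → R) (j : ℕ) :
    ∀ (t : ℕ) (n : ℤ),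
      mAux w j (-(2 * (t : ℤ))) (n + 2 * t) = prodW w n t * mAux w j (2 * t) n := by
  induction j with
  | zero =>
      intro t n
      cases t with
      | zero => simp [mAux_zero, prodW]
      | succ t =>
          rw [mAux_zero, mAux_zero]
          have h1 : ¬(-(2 * ((t : ℤ) + 1)) = 0) := by omega
          have h2 : ¬(2 * ((t : ℤ) + 1) = 0) := by omega
          push_cast
          simp [h1, h2]
  | succ j ih =>
      intro t n
      cases t with
      | zero =>
          simp only [Nat.cast_zero, mul_zero, neg_zero, add_zero, prodW, one_mul]
      | succ t =>
          have hc : ((t : ℤ) + 1) = ((t + 1 : ℕ) : ℤ) := by push_cast; ring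
          rw [mAux_left_rec, mAux_succ]
          have e1 : -(2 * ((t + 1 : ℕ) : ℤ)) - 2 = -(2 * ((t + 2 : ℕ) : ℤ)) := by
            push_cast; ring
          have e2 : n + 2 * ((t + 1 : ℕ) : ℤ) + 2 = n + 2 * ((t + 2 : ℕ) : ℤ) := by
            push_cast; ring
          have e3 : -(2 * ((t + 1 : ℕ) : ℤ)) + 2 = -(2 * ((t : ℕ) : ℤ)) := by
            push_cast; ring
          have e4 : n + 2 * ((t + 1 : ℕ) : ℤ) - 2 = n + 2 * ((t : ℕ) : ℤ) := by
            push_cast; ring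
          rw [e1, e2, e3, e4, ih (t + 2) n, ih (t + 1) n, ih t n,
            show prodW w n (t + 2) = prodW w n t * (w (n + 2 * t + 1) * w (n + 2 * t + 2)) *
              (w (n + 2 * (t + 1 : ℕ) + 1) * w (n + 2 * (t + 1 : ℕ) + 2)) from rfl,
            show prodW w n (t + 1) = prodW w n t * (w (n + 2 * t + 1) * w (n + 2 * t + 2)) from rfl]
          push_cast
          ring_nf

theorem mCoef_neg_two_eq (R : Type*) [CommRing R] (w : ℤ → R) (j : ℤ) (hj : 0 ≤ j) (n : ℤ) :
    mCoef w j (-2) n = w n * w (n - 1) * mCoef w j 2 (n - 2) := by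
  have h := mAux_symm w j.toNat 1 (n - 2)
  simp only [Nat.cast_one, prodW, one_mul] at h
  rw [show n - 2 + 2 * (1 : ℤ) = n from by ring, show -(2 * (1 : ℤ)) = -2 from by ring,
    show (2 : ℤ) * 1 = 2 from by ring, show n - 2 + 2 * (0 : ℕ) + 1 = n - 1 from by push_cast; ring,
    show n - 2 + 2 * (0 : ℕ) + 2 = n from by push_cast; ring] at h
  unfold mCoef
  rw [h]; ring
end

section
/- For every commutative ring R, every family w : ℤ → R, every integer j ≥ 1 and every n ∈ ℤ, one has m_{j,-2}(n) − m_{j,-2}(n−2) − (w_{n-1} + w_{n-2})(m_{j-1,-2}(n) − m_{j-1,-2}(n−2)) + w_{n-2} w_{n-3} m_{j-1,0}(n−4) − w_n w_{n-1} m_{j-1,0}(n) = 0. -/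
/-- The "other side" recursion, coming from `L^{j+1} = L ∘ L^j`. -/
lemma mAux_alt {R : Type*} [CommRing R] (w : ℤ → R) :
    ∀ (j : ℕ) (k n : ℤ),
      mAux w (j + 1) k n =
        mAux w j (k - 2) (n + 2) + (w (n + 1) + w n) * mAux w j k n +
          w n * w (n - 1) * mAux w j (k + 2) (n - 2) := by
  intro j
  induction j with
  | zero =>
      intro k n
      by_cases h1 : k = 0
      · subst h1; simp [mAux]
      · by_cases h2 : k = 2
        · subst h2; norm_num [mAux]
        · by_cases h3 : k = -2
          · subst h3; norm_num [mAux]; ring_nf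
          · simp [mAux, h1, show k - 2 ≠ 0 by omega, show k + 2 ≠ 0 by omega]
  | succ j ih =>
      intro k n
      conv_lhs => rw [mAux_succ w (j + 1) k n, ih (k - 2) n, ih k n, ih (k + 2) n]
      conv_rhs => rw [mAux_succ w j (k - 2) (n + 2), mAux_succ w j k n,
        mAux_succ w j (k + 2) (n - 2)]
      ring_nf

theorem mCoef_neg_two_identity (R : Type*) [CommRing R] (w : ℤ → R) (j : ℤ) (hj : 1 ≤ j) (n : ℤ) :
    mCoef w j (-2) n - mCoef w j (-2) (n - 2) -
        (w (n - 1) + w (n - 2)) * (mCoef w (j - 1) (-2) n - mCoef w (j - 1) (-2) (n - 2)) +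
        w (n - 2) * w (n - 3) * mCoef w (j - 1) 0 (n - 4) -
        w n * w (n - 1) * mCoef w (j - 1) 0 n = 0 := by
  set m : ℕ := (j - 1).toNat with hm
  have hjm : j.toNat = m + 1 := by omega
  simp only [mCoef, hjm]
  rw [mAux_succ w m (-2) n, mAux_alt w m (-2) (n - 2)]
  have e1 : n - 2 + 2 = n := by ring
  have e2 : n - 2 - 2 = n - 4 := by ring
  have e3 : n + -2 + 1 = n - 1 := by ring
  have e4 : n + -2 = n - 2 := by ring
  have e5 : n + -2 + 2 = n := by ring
  have e6 : n - 2 + 1 = n - 1 := by ring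
  have e7 : n - 2 - 1 = n - 3 := by ring
  have e8 : (-2 : ℤ) - 2 = -4 := by ring
  have e9 : (-2 : ℤ) + 2 = 0 := by ring
  simp only [e1, e2, e3, e4, e5, e6, e7, e8, e9, ← hm]
  ring
end

section
/- (Key identity) For every commutative ring R, every family w : ℤ → R, every integer j ≥ 0 and every n ∈ ℤ, the identity m_{j,0}(n+1) − m_{j,0}(n) = w_{n+2} m_{j,2}(n) − w_n m_{j,2}(n−1) holds. -/
lemma mAux_key {R : Type*} [CommRing R] (w : ℤ → R) :
    ∀ (j : ℕ) (k n : ℤ),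
      mAux w j k (n + 1) - mAux w j k n =
        w (n + k + 2) * mAux w j (k + 2) n - w n * mAux w j (k + 2) (n - 1) := by
  intro j
  induction j with
  | zero =>
      intro k n
      by_cases h : k = -2
      · subst h
        simp [mAux]
      · have h2 : k + 2 ≠ 0 := by omega
        simp [mAux, h2]
  | succ j ih =>
      intro k n
      have h1 := ih (k - 2) n
      have h2 := ih k n
      have h3 := ih (k + 2) n
      simp only [mAux]
      ring_nf
      ring_nf at h1 h2 h3
      linear_combination h1 + (w (2 + k + n) + w (1 + k + n)) * h2 +
        w (3 + k + n) * w (2 + k + n) * h3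

theorem mCoef_key_identity (R : Type*) [CommRing R] (w : ℤ → R) (j : ℤ) (hj : 0 ≤ j) (n : ℤ) :
    mCoef w j 0 (n + 1) - mCoef w j 0 n =
      w (n + 2) * mCoef w j 2 n - w n * mCoef w j 2 (n - 1) := by
  have h := mAux_key w j.toNat 0 n
  simpa [mCoef] using h
end

section
/- (Expansion of the positive part of L^j.) For every commutative ring R, every family w : ℤ → R, every integer j ≥ 1 and all k, n ∈ ℤ, one has Σ_{i=1}^{j} ( m_{i-1,-2}(n) m_{j-i,k}(n) − w_n w_{n-1} m_{i-1,0}(n) m_{j-i,k+2}(n−2) ) = 0 if k ≥ 0, and = −m_{j,k}(n) if k < 0. (Equivalently, (L^j)_+ = L^j + Σ_{i=1}^{j} ( m_{i-1,-2} − w_n w_{n-1} m_{i-1,0} Λ^{-2} ) L^{j-i}, where the subscript + denotes the part of a difference operator containing only nonnegative powers of Λ.) -/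
lemma mAux_odd {R : Type*} [CommRing R] (w : ℤ → R) :
    ∀ (J : ℕ) (k n : ℤ), Odd k → mAux w J k n = 0
  | 0, k, n, hk => by
      obtain ⟨m, rfl⟩ := hk
      rw [mAux, if_neg (by omega)]
  | J + 1, k, n, hk => by
      have h1 : Odd (k - 2) := by obtain ⟨m, rfl⟩ := hk; exact ⟨m - 1, by ring⟩
      have h2 : Odd (k + 2) := by obtain ⟨m, rfl⟩ := hk; exact ⟨m + 1, by ring⟩
      rw [mAux, mAux_odd w J _ n h1, mAux_odd w J k n hk, mAux_odd w J _ n h2]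
      ring

lemma mCoef_odd {R : Type*} [CommRing R] (w : ℤ → R) (j k n : ℤ) (hk : Odd k) :
    mCoef w j k n = 0 := mAux_odd w _ k n hk

lemma mCoef_zero {R : Type*} [CommRing R] (w : ℤ → R) (k n : ℤ) :
    mCoef w 0 k n = if k = 0 then 1 else 0 := rfl

lemma mCoef_succ {R : Type*} [CommRing R] (w : ℤ → R) {j : ℤ} (hj : 0 ≤ j) (k n : ℤ) :
    mCoef w (j + 1) k n = mCoef w j (k - 2) n + (w (n + k + 1) + w (n + k)) * mCoef w j k n +
      w (n + k + 2) * w (n + k + 1) * mCoef w j (k + 2) n := by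
  unfold mCoef
  rw [show (j + 1).toNat = j.toNat + 1 by omega]
  rfl

lemma mCoef_one {R : Type*} [CommRing R] (w : ℤ → R) (k n : ℤ) :
    mCoef w 1 k n = (if k - 2 = 0 then 1 else 0) +
      (w (n + k + 1) + w (n + k)) * (if k = 0 then 1 else 0) +
      w (n + k + 2) * w (n + k + 1) * (if k + 2 = 0 then 1 else 0) := by
  have h := mCoef_succ w (le_refl (0 : ℤ)) k n
  rw [zero_add] at h
  rw [h, mCoef_zero, mCoef_zero, mCoef_zero]

set_option maxHeartbeats 1000000 in
lemma key {R : Type*} [CommRing R] (w : ℤ → R) (J : ℕ) : ∀ (k n : ℤ),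
    ∑ i ∈ Finset.Icc (1 : ℤ) ((J : ℤ) + 1),
        (mCoef w (i - 1) (-2) n * mCoef w ((J : ℤ) + 1 - i) k n -
          w n * w (n - 1) * mCoef w (i - 1) 0 n * mCoef w ((J : ℤ) + 1 - i) (k + 2) (n - 2)) =
      if 0 ≤ k then 0 else -mCoef w ((J : ℤ) + 1) k n := by
  induction J with
  | zero =>
      intro k n
      simp only [Nat.cast_zero, zero_add]
      rw [Finset.Icc_self, Finset.sum_singleton, show (1 : ℤ) - 1 = 0 by ring]
      simp only [mCoef_zero, mCoef_one]
      split_ifs <;> first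
        | (exfalso; first | assumption | omega)
        | ring1
        | (rw [show n + k + 2 = n by omega, show n + k + 1 = n - 1 by omega]; ring1)
  | succ J ih =>
      intro k n
      have hc : ((J + 1 : ℕ) : ℤ) + 1 = ((J : ℤ) + 1) + 1 := by push_cast; ring
      rw [hc]
      set j : ℤ := (J : ℤ) + 1 with hjdef
      have hj : 1 ≤ j := by rw [hjdef]; omega
      have hins : Finset.Icc (1 : ℤ) (j + 1) = insert (j + 1) (Finset.Icc 1 j) :=
        Finset.ext fun x => by simp only [Finset.mem_Icc, Finset.mem_insert]; omega
      rw [hins, Finset.sum_insert (by simp only [Finset.mem_Icc]; omega)]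
      have hsplit : ∀ i ∈ Finset.Icc (1 : ℤ) j,
          (mCoef w (i - 1) (-2) n * mCoef w (j + 1 - i) k n -
            w n * w (n - 1) * mCoef w (i - 1) 0 n * mCoef w (j + 1 - i) (k + 2) (n - 2))
          = (mCoef w (i - 1) (-2) n * mCoef w (j - i) (k - 2) n -
              w n * w (n - 1) * mCoef w (i - 1) 0 n * mCoef w (j - i) (k - 2 + 2) (n - 2))
            + (w (n + k + 1) + w (n + k)) *
              (mCoef w (i - 1) (-2) n * mCoef w (j - i) k n -
                w n * w (n - 1) * mCoef w (i - 1) 0 n * mCoef w (j - i) (k + 2) (n - 2))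
            + w (n + k + 2) * w (n + k + 1) *
              (mCoef w (i - 1) (-2) n * mCoef w (j - i) (k + 2) n -
                w n * w (n - 1) * mCoef w (i - 1) 0 n * mCoef w (j - i) (k + 2 + 2) (n - 2)) := by
        intro i hi
        rw [Finset.mem_Icc] at hi
        rw [show j + 1 - i = (j - i) + 1 by ring, mCoef_succ w (by omega), mCoef_succ w (by omega)]
        rw [show n - 2 + (k + 2) + 1 = n + k + 1 by ring, show n - 2 + (k + 2) = n + k by ring,
          show k + 2 - 2 = k - 2 + 2 by ring]
        ring
      rw [Finset.sum_congr rfl hsplit, Finset.sum_add_distrib, Finset.sum_add_distrib,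
        ← Finset.mul_sum, ← Finset.mul_sum, ih (k - 2) n, ih k n, ih (k + 2) n]
      rw [show j + 1 - 1 = j by ring, sub_self, mCoef_zero, mCoef_zero,
        mCoef_succ w (by omega : (0 : ℤ) ≤ j) k n]
      by_cases hodd : Odd k
      · have h1 : Odd (k - 2) := by obtain ⟨m, rfl⟩ := hodd; exact ⟨m - 1, by ring⟩
        have h2 : Odd (k + 2) := by obtain ⟨m, rfl⟩ := hodd; exact ⟨m + 1, by ring⟩
        rw [mCoef_odd w j _ n h1, mCoef_odd w j k n hodd, mCoef_odd w j _ n h2,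
          if_neg (by obtain ⟨m, rfl⟩ := hodd; omega : ¬ k = 0),
          if_neg (by obtain ⟨m, rfl⟩ := hodd; omega : ¬ k + 2 = 0)]
        simp
      · have h2k : (2 : ℤ) ∣ k := (Int.not_odd_iff_even.mp hodd).two_dvd
        split_ifs <;> first
          | (exfalso; first | assumption | omega)
          | ring1
          | (rw [show n + k + 2 = n by omega, show n + k + 1 = n - 1 by omega]; ring1)
          | (obtain rfl : k = 0 := by omega
             rw [show (0 : ℤ) - 2 = -2 by ring]; ring1)
          | (obtain rfl : k = -2 := by omega
             rw [show n + -2 + 2 = n by ring, show n + -2 + 1 = n - 1 by ring,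
               show (-2 : ℤ) + 2 = 0 by ring]; ring1)

open Finset in
theorem positive_part_expansion (R : Type*) [CommRing R] (w : ℤ → R) (j : ℤ) (hj : 1 ≤ j)
    (k n : ℤ) :
    ∑ i ∈ Finset.Icc (1 : ℤ) j,
        (mCoef w (i - 1) (-2) n * mCoef w (j - i) k n -
          w n * w (n - 1) * mCoef w (i - 1) 0 n * mCoef w (j - i) (k + 2) (n - 2)) =
      if 0 ≤ k then 0 else -mCoef w j k n := by
  obtain ⟨J, rfl⟩ : ∃ J : ℕ, j = (J : ℤ) + 1 := ⟨(j - 1).toNat, by omega⟩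
  exact key w J k n
end

section
/- For every commutative ring R, every family w : ℤ → R, every integer j ≥ 1 and every n ∈ ℤ, the identity m_{j,0}(n) = A_{2j-2,-1}(n+1) + A_{2j-2,-1}(n) holds. (This is the coefficient form of the relation γ_n(λ^2) = (A_{n-1}(λ) + A_{n-2}(λ) + 1)/λ^2 between the (2,1)-entry γ of the discrete KdV basic resolvent and the Toda resolvent series A_n(λ) = Σ_{ℓ≥0} A_{ℓ-1,-1}(n) λ^{-ℓ-1}.) -/
/-- Coefficients of the powers `P^ℓ = Σ_k (aAux w ℓ k n) Λ^k` of the difference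
operator `P = Λ + w_n Λ⁻¹` (natural-number power index `ℓ ≥ 0`). -/
def aAux {R : Type*} [CommRing R] (w : ℤ → R) : ℕ → ℤ → ℤ → R
  | 0, k, _ => if k = 0 then 1 else 0
  | l + 1, k, n => aAux w l (k - 1) n + w (n + k + 1) * aAux w l (k + 1) n

/-- `aCoef w ℓ k n` is `A_{ℓ,k}(n)`, the coefficient of `Λ^k` in `P^{ℓ+1}`,
for an integer `ℓ` (meaningful for `ℓ ≥ -1`). -/
def aCoef {R : Type*} [CommRing R] (w : ℤ → R) (l k n : ℤ) : R := aAux w (l + 1).toNat k n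

/-- The "other side" recursion, coming from `P^{l+1} = P ∘ P^l`. -/
lemma aAux_rec2 {R : Type*} [CommRing R] (w : ℤ → R) :
    ∀ (l : ℕ) (k n : ℤ),
      aAux w (l + 1) k n = aAux w l (k - 1) (n + 1) + w n * aAux w l (k + 1) (n - 1)
  | 0, k, n => by
      rcases eq_or_ne k (-1) with h | h
      · subst h
        have h1 : n + (-1 : ℤ) + 1 = n := by ring
        simp [aAux, h1]
      · have h1 : k + 1 ≠ 0 := by omega
        simp [aAux, h1]
  | (l + 1), k, n => by
      have e1 : aAux w (l + 1 + 1) k n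
          = aAux w (l + 1) (k - 1) n + w (n + k + 1) * aAux w (l + 1) (k + 1) n := rfl
      have e2 : aAux w (l + 1) (k - 1) (n + 1)
          = aAux w l (k - 1 - 1) (n + 1 + 1) + w (n + 1) * aAux w l (k - 1 + 1) (n + 1 - 1) :=
        aAux_rec2 w l (k - 1) (n + 1)
      have e3 : aAux w (l + 1) (k + 1) (n - 1)
          = aAux w l (k + 1 - 1) (n - 1 + 1) + w (n - 1) * aAux w l (k + 1 + 1) (n - 1 - 1) :=
        aAux_rec2 w l (k + 1) (n - 1)
      have e4 : aAux w (l + 1) (k - 1) n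
          = aAux w l (k - 1 - 1) (n + 1) + w n * aAux w l (k - 1 + 1) (n - 1) :=
        aAux_rec2 w l (k - 1) n
      have e5 : aAux w (l + 1) (k + 1) n
          = aAux w l (k + 1 - 1) (n + 1) + w n * aAux w l (k + 1 + 1) (n - 1) :=
        aAux_rec2 w l (k + 1) n
      have e6 : aAux w (l + 1) (k - 1) (n + 1)
          = aAux w l (k - 1 - 1) (n + 1) + w (n + 1 + (k - 1) + 1) * aAux w l (k - 1 + 1) (n + 1) := rfl
      have e7 : aAux w (l + 1) (k + 1) (n - 1)
          = aAux w l (k + 1 - 1) (n - 1) + w (n - 1 + (k + 1) + 1) * aAux w l (k + 1 + 1) (n - 1) := rfl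
      rw [e1, e4, e5, e6, e7]
      have h1 : n + 1 + (k - 1) + 1 = n + k + 1 := by ring
      have h2 : n - 1 + (k + 1) + 1 = n + k + 1 := by ring
      have h3 : k - 1 - 1 = k - 1 - 1 := rfl
      rw [h1, h2]
      ring

/-- Symmetry identity: `(∏_{i=1}^{k} w_{n+i}) · (P^L)_{n,n+k} = (P^L)_{n+k,n}`. -/
lemma aAux_symm {R : Type*} [CommRing R] (w : ℤ → R) :
    ∀ (L : ℕ) (k : ℕ) (n : ℤ),
      (∏ i ∈ Finset.range k, w (n + i + 1)) * aAux w L (k : ℤ) n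
        = aAux w L (-(k : ℤ)) (n + k)
  | 0, k, n => by
      cases k with
      | zero => simp [aAux]
      | succ k' =>
          simp only [aAux]
          rw [if_neg (by push_cast; omega : ¬((((k' + 1 : ℕ)) : ℤ) = 0)),
              if_neg (by push_cast; omega : ¬(-(((k' + 1 : ℕ)) : ℤ) = 0))]
          ring
  | (L + 1), 0, n => by simp
  | (L + 1), (k' + 1), n => by
      have gc : (((k' + 1 : ℕ)) : ℤ) = (k' : ℤ) + 1 := by push_cast; ring
      rw [gc]
      have erec : aAux w (L + 1) ((k' : ℤ) + 1) n
          = aAux w L ((k' : ℤ) + 1 - 1) n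
            + w (n + ((k' : ℤ) + 1) + 1) * aAux w L ((k' : ℤ) + 1 + 1) n := rfl
      have h1 : (k' : ℤ) + 1 - 1 = (k' : ℤ) := by ring
      have h2 : (k' : ℤ) + 1 + 1 = ((k' + 2 : ℕ) : ℤ) := by push_cast; ring
      have p1 : (∏ i ∈ Finset.range (k' + 1), w (n + i + 1))
          = (∏ i ∈ Finset.range k', w (n + i + 1)) * w (n + k' + 1) := by
        rw [Finset.prod_range_succ]
      have p2 : (∏ i ∈ Finset.range (k' + 2), w (n + i + 1))
          = (∏ i ∈ Finset.range k', w (n + i + 1)) * w (n + k' + 1)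
              * w (n + ((k' : ℤ) + 1) + 1) := by
        rw [Finset.prod_range_succ, Finset.prod_range_succ]
        rw [show n + ((k' + 1 : ℕ) : ℤ) + 1 = n + ((k' : ℤ) + 1) + 1 from by push_cast; ring]
      have erhs : aAux w (L + 1) (-((k' : ℤ) + 1)) (n + ((k' : ℤ) + 1))
          = aAux w L (-((k' : ℤ) + 1) - 1) (n + ((k' : ℤ) + 1) + 1)
            + w (n + ((k' : ℤ) + 1)) * aAux w L (-((k' : ℤ) + 1) + 1) (n + ((k' : ℤ) + 1) - 1) :=
        aAux_rec2 w L _ _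
      have q1 : -((k' : ℤ) + 1) - 1 = -((k' + 2 : ℕ) : ℤ) := by push_cast; ring
      have q2 : n + ((k' : ℤ) + 1) + 1 = n + ((k' + 2 : ℕ) : ℤ) := by push_cast; ring
      have q3 : -((k' : ℤ) + 1) + 1 = -(k' : ℤ) := by ring
      have q4 : n + ((k' : ℤ) + 1) - 1 = n + (k' : ℤ) := by ring
      have q5 : n + ((k' : ℤ) + 1) = n + (k' : ℤ) + 1 := by ring
      have lhs_eq : (∏ i ∈ Finset.range (k' + 1), w (n + i + 1))
            * aAux w (L + 1) ((k' : ℤ) + 1) n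
          = (∏ i ∈ Finset.range k', w (n + i + 1)) * w (n + k' + 1) * aAux w L (k' : ℤ) n
            + (∏ i ∈ Finset.range k', w (n + i + 1)) * w (n + k' + 1)
                * w (n + ((k' : ℤ) + 1) + 1) * aAux w L ((k' + 2 : ℕ) : ℤ) n := by
        rw [erec, h1, h2, p1]; ring
      have rhs_eq : aAux w (L + 1) (-((k' : ℤ) + 1)) (n + ((k' : ℤ) + 1))
          = aAux w L (-((k' + 2 : ℕ) : ℤ)) (n + ((k' + 2 : ℕ) : ℤ))
            + w (n + (k' : ℤ) + 1) * aAux w L (-(k' : ℤ)) (n + (k' : ℤ)) := by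
        rw [erhs, q1, q2, q3, q4, q5]
      rw [lhs_eq, rhs_eq, ← aAux_symm w L (k' + 2) n, ← aAux_symm w L k' n, p2]
      ring

/-- `L = P²`, at the level of coefficients. -/
lemma mAux_eq_aAux {R : Type*} [CommRing R] (w : ℤ → R) :
    ∀ (j : ℕ) (k n : ℤ), mAux w j k n = aAux w (2 * j) k n
  | 0, k, n => rfl
  | (j + 1), k, n => by
      have e1 : mAux w (j + 1) k n
          = mAux w j (k - 2) n + (w (n + k + 1) + w (n + k)) * mAux w j k n +
              w (n + k + 2) * w (n + k + 1) * mAux w j (k + 2) n := rfl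
      have e2 : 2 * (j + 1) = (2 * j + 1) + 1 := by ring
      rw [e1, e2]
      have e3 : aAux w ((2 * j + 1) + 1) k n
          = aAux w (2 * j + 1) (k - 1) n + w (n + k + 1) * aAux w (2 * j + 1) (k + 1) n := rfl
      have e4 : aAux w (2 * j + 1) (k - 1) n
          = aAux w (2 * j) (k - 1 - 1) n + w (n + (k - 1) + 1) * aAux w (2 * j) (k - 1 + 1) n := rfl
      have e5 : aAux w (2 * j + 1) (k + 1) n
          = aAux w (2 * j) (k + 1 - 1) n + w (n + (k + 1) + 1) * aAux w (2 * j) (k + 1 + 1) n := rfl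
      rw [e3, e4, e5, mAux_eq_aAux w j (k - 2) n, mAux_eq_aAux w j k n, mAux_eq_aAux w j (k + 2) n]
      have h1 : k - 1 - 1 = k - 2 := by ring
      have h2 : k - 1 + 1 = k := by ring
      have h3 : k + 1 - 1 = k := by ring
      have h4 : k + 1 + 1 = k + 2 := by ring
      have h5 : n + (k - 1) + 1 = n + k := by ring
      have h6 : n + (k + 1) + 1 = n + k + 2 := by ring
      rw [h1, h2, h3, h4, h5, h6]
      ring

theorem gamma_eq_A (R : Type*) [CommRing R] (w : ℤ → R) (j : ℤ) (hj : 1 ≤ j) (n : ℤ) :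
    mCoef w j 0 n = aCoef w (2 * j - 2) (-1) (n + 1) + aCoef w (2 * j - 2) (-1) n := by
  obtain ⟨m, hm⟩ : ∃ m : ℕ, j = (m : ℤ) + 1 := ⟨(j - 1).toNat, by omega⟩
  subst hm
  have hJ : ((m : ℤ) + 1).toNat = m + 1 := by omega
  have hA : (2 * ((m : ℤ) + 1) - 2 + 1).toNat = 2 * m + 1 := by omega
  unfold mCoef aCoef
  rw [hJ, hA, mAux_eq_aAux w (m + 1) 0 n]
  have e2 : 2 * (m + 1) = (2 * m + 1) + 1 := by ring
  rw [e2]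
  have erec : aAux w ((2 * m + 1) + 1) (0 : ℤ) n
      = aAux w (2 * m + 1) (0 - 1) n + w (n + 0 + 1) * aAux w (2 * m + 1) (0 + 1) n := rfl
  rw [erec]
  have hsym := aAux_symm w (2 * m + 1) 1 n
  simp only [Finset.prod_range_one, Nat.cast_one, Nat.cast_zero] at hsym
  norm_num at hsym ⊢
  rw [hsym]
  ring
end

section
/- Let S be a commutative ℚ-algebra, λ, μ ∈ S, and let w, a, b : ℤ → S be sequences such that for all n ∈ ℤ: w_{n+1}(a_{n+2} + a_{n+1} + 1) − w_n(a_n + a_{n-1} + 1) = λ^2 (a_{n+1} − a_n) and w_{n+1}(b_{n+2} + b_{n+1} + 1) − w_n(b_n + b_{n-1} + 1) = μ^2 (b_{n+1} − b_n). Then for all n ∈ ℤ the following identity holds: −λ^2 μ^2 + 2·[λ^2 a_{n-1} − w_{n-1}(a_{n-1} + a_{n-2} + 1) + λ^2/2]·[μ^2 b_{n-1} − w_{n-1}(b_{n-1} + b_{n-2} + 1) + μ^2/2] − w_{n-1}·[ (a_{n-1} + a_{n-2} + 1)·( μ^2 (b_n − b_{n-1}) + w_{n-1}(b_{n-1} +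 b_{n-2} + 1) ) + (b_{n-1} + b_{n-2} + 1)·( λ^2 (a_n − a_{n-1}) + w_{n-1}(a_{n-1} + a_{n-2} + 1) ) ] − w_n·[ (a_n + a_{n-1} + 1)·( μ^2 (b_{n+1} − b_n) + w_n(b_n + b_{n-1} + 1) ) + (b_n + b_{n-1} + 1)·( λ^2 (a_{n+1} − a_n) + w_n(a_n + a_{n-1} + 1) ) ] + 2·[λ^2 a_n − w_n(a_n + a_{n-1} + 1) + λ^2/2]·[μ^2 b_n − w_n(b_n + b_{n-1} + 1) + μ^2/2] = 2 λ^2 μ^2 (a_n + b_n + 2 a_n b_n) − w_n (λ^2 + μ^2)·[ (a_{n+1} + a_n + 1)(b_n + b_{n-1} + 1) + (b_{n+1} + b_n + 1)(a_n + a_{n-1} + 1) ]. -/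
theorem two_point_key_identity (S : Type*) [CommRing S] [Algebra ℚ S]
    (lam mu : S) (w a b : ℤ → S)
    (ha : ∀ n : ℤ,
      w (n + 1) * (a (n + 2) + a (n + 1) + 1) - w n * (a n + a (n - 1) + 1) =
        lam ^ 2 * (a (n + 1) - a n))
    (hb : ∀ n : ℤ,
      w (n + 1) * (b (n + 2) + b (n + 1) + 1) - w n * (b n + b (n - 1) + 1) =
        mu ^ 2 * (b (n + 1) - b n)) :
    ∀ n : ℤ,
      -(lam ^ 2 * mu ^ 2) +
          2 * (lam ^ 2 * a (n - 1) - w (n - 1) * (a (n - 1) + a (n - 2) + 1) +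
                ((1 : ℚ) / 2) • lam ^ 2) *
              (mu ^ 2 * b (n - 1) - w (n - 1) * (b (n - 1) + b (n - 2) + 1) +
                ((1 : ℚ) / 2) • mu ^ 2) -
          w (n - 1) *
            ((a (n - 1) + a (n - 2) + 1) *
                (mu ^ 2 * (b n - b (n - 1)) + w (n - 1) * (b (n - 1) + b (n - 2) + 1)) +
              (b (n - 1) + b (n - 2) + 1) *
                (lam ^ 2 * (a n - a (n - 1)) + w (n - 1) * (a (n - 1) + a (n - 2) + 1))) -
          w n *
            ((a n + a (n - 1) + 1) *
                (mu ^ 2 * (b (n + 1) - b n) + w n * (b n + b (n - 1) + 1)) +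
              (b n + b (n - 1) + 1) *
                (lam ^ 2 * (a (n + 1) - a n) + w n * (a n + a (n - 1) + 1))) +
          2 * (lam ^ 2 * a n - w n * (a n + a (n - 1) + 1) + ((1 : ℚ) / 2) • lam ^ 2) *
              (mu ^ 2 * b n - w n * (b n + b (n - 1) + 1) + ((1 : ℚ) / 2) • mu ^ 2) =
        2 * lam ^ 2 * mu ^ 2 * (a n + b n + 2 * a n * b n) -
          w n * (lam ^ 2 + mu ^ 2) *
            ((a (n + 1) + a n + 1) * (b n + b (n - 1) + 1) +
              (b (n + 1) + b n + 1) * (a n + a (n - 1) + 1)) := by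
  intro n
  have hA := ha (n - 1)
  have hB := hb (n - 1)
  rw [show n - 1 + 1 = n by ring, show n - 1 + 2 = n + 1 by ring,
    show n - 1 - 1 = n - 2 by ring] at hA hB
  have hL : ((1 : ℚ) / 2) • lam ^ 2 + ((1 : ℚ) / 2) • lam ^ 2 = lam ^ 2 := by
    rw [← add_smul]; norm_num
  have hM : ((1 : ℚ) / 2) • mu ^ 2 + ((1 : ℚ) / 2) • mu ^ 2 = mu ^ 2 := by
    rw [← add_smul]; norm_num
  linear_combination
    (mu ^ 2 * (b n + b (n - 1) + 1)) * hA +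
    (lam ^ 2 * (a n + a (n - 1) + 1)) * hB +
    (mu ^ 2 * (b n + b (n - 1) + 1) - w n * (b n + b (n - 1) + 1) -
      w (n - 1) * (b (n - 1) + b (n - 2) + 1)) * hL +
    (2 * (((1 : ℚ) / 2) • lam ^ 2) + lam ^ 2 * (a n + a (n - 1)) -
      w n * (a n + a (n - 1) + 1) -
      w (n - 1) * (a (n - 1) + a (n - 2) + 1)) * hM
end

section
/- Let R be a commutative ring, D : R → R a derivation (additive and satisfying the Leibniz rule), w : ℤ → R a family of elements, and j ≥ 1 an integer. Assume that for every n ∈ ℤ: (i) D(w_{n+1} + w_n) = w_{n+2} w_{n+1} m_{j,2}(n) − w_n w_{n-1} m_{j,2}(n−2), and (ii) D(w_n w_{n-1}) = w_n w_{n-1} ( m_{j,0}(n) − m_{j,0}(n−2) ). Then for every n ∈ ℤ: (w_{n+1} − w_n)·( D(w_n) − w_n ( m_{j,0}(n) − m_{j,0}(n−1) ) ) = 0. In particular, if each w_{n+1} − w_n is not a zero divisor in R, then D(w_n) = w_n ( m_{j,0}(n) − m_{j,0}(n−1) ) for all n, i.e. the Lax flow of L = P^2 implies the discrete KdV flow of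 P. (This is the nontrivial direction of the equivalence between the two formulations of the discrete KdV hierarchy.) -/
/-- Coefficients of powers of `P = Λ + w_n Λ⁻¹`: `P^i = Σ_k pAux w i k n · Λ^k`. -/
def pAux {R : Type*} [CommRing R] (w : ℤ → R) : ℕ → ℤ → ℤ → R
  | 0, k, _ => if k = 0 then 1 else 0
  | i + 1, k, n => pAux w i (k - 1) n + w (n + k + 1) * pAux w i (k + 1) n

lemma pAux_succ {R : Type*} [CommRing R] (w : ℤ → R) (i : ℕ) (k n : ℤ) :
    pAux w (i + 1) k n = pAux w i (k - 1) n + w (n + k + 1) * pAux w i (k + 1) n := rfl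

/-- `L = P²` at the coefficient level: `m_{j,k}(n) = p_{2j,k}(n)`. -/
lemma m_eq_p {R : Type*} [CommRing R] (w : ℤ → R) : ∀ (j : ℕ) (k n : ℤ),
    mAux w j k n = pAux w (2 * j) k n := by
  intro j
  induction j with
  | zero => intro k n; rfl
  | succ j ih =>
    intro k n
    have h2 : 2 * (j + 1) = (2 * j) + 1 + 1 := by ring
    rw [h2, pAux_succ, pAux_succ, pAux_succ]
    rw [show k - 1 - 1 = k - 2 from by ring, show n + (k - 1) + 1 = n + k from by ring,
      show k - 1 + 1 = k from by ring, show n + (k + 1) + 1 = n + k + 2 from by ring]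
    simp only [mAux, ih]
    ring

/-- The commutation `[P, P^i] = 0` at the coefficient level. -/
lemma pcomm {R : Type*} [CommRing R] (w : ℤ → R) : ∀ (i : ℕ) (k n : ℤ),
    pAux w i (k - 1) (n + 1) + w n * pAux w i (k + 1) (n - 1) =
      pAux w i (k - 1) n + w (n + k + 1) * pAux w i (k + 1) n := by
  intro i
  induction i with
  | zero =>
    intro k n
    by_cases hk : k = -1
    · subst hk
      simp only [pAux]
      norm_num
    · have : ¬(k + 1 = 0) := by omega
      simp only [pAux, if_neg this]
      ring
  | succ i ih =>
    intro k n
    rw [pAux_succ, pAux_succ, pAux_succ, pAux_succ]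
    rw [show k - 1 - 1 = k - 2 from by ring, show k - 1 + 1 = k from by ring,
      show k + 1 - 1 = k from by ring,
      show n + 1 + (k - 1) + 1 = n + k + 1 from by ring,
      show n - 1 + (k + 1) + 1 = n + k + 1 from by ring,
      show n + (k - 1) + 1 = n + k from by ring,
      show n + (k + 1) + 1 = n + k + 2 from by ring]
    have h1 := ih (k - 1) n
    rw [show k - 1 - 1 = k - 2 from by ring, show k - 1 + 1 = k from by ring,
      show n + (k - 1) + 1 = n + k from by ring] at h1
    have h2 := ih (k + 1) n
    rw [show k + 1 - 1 = k from by ring,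
      show n + (k + 1) + 1 = n + k + 2 from by ring] at h2
    linear_combination h1 + w (n + k + 1) * h2

theorem lax_flow_implies_dkdv_flow (R : Type*) [CommRing R] (D : R → R)
    (hadd : ∀ x y : R, D (x + y) = D x + D y)
    (hleib : ∀ x y : R, D (x * y) = x * D y + D x * y)
    (w : ℤ → R) (j : ℤ) (hj : 1 ≤ j)
    (h1 : ∀ n : ℤ, D (w (n + 1) + w n) =
      w (n + 2) * w (n + 1) * mCoef w j 2 n - w n * w (n - 1) * mCoef w j 2 (n - 2))
    (h2 : ∀ n : ℤ, D (w n * w (n - 1)) =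
      w n * w (n - 1) * (mCoef w j 0 n - mCoef w j 0 (n - 2))) :
    (∀ n : ℤ,
      (w (n + 1) - w n) * (D (w n) - w n * (mCoef w j 0 n - mCoef w j 0 (n - 1))) = 0) ∧
    ((∀ (n : ℤ) (r : R), (w (n + 1) - w n) * r = 0 → r = 0) →
      ∀ n : ℤ, D (w n) = w n * (mCoef w j 0 n - mCoef w j 0 (n - 1))) := by
  have hm : ∀ k n : ℤ, mCoef w j k n = pAux w (2 * j.toNat) k n :=
    fun k n => m_eq_p w j.toNat k n
  have stepI : ∀ n : ℤ,
      (D (w (n + 1)) - w (n + 1) * (pAux w (2 * j.toNat) 0 (n + 1) - pAux w (2 * j.toNat) 0 n))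
        + (D (w n) - w n * (pAux w (2 * j.toNat) 0 n - pAux w (2 * j.toNat) 0 (n - 1))) = 0 := by
    intro n
    have h := h1 n
    rw [hadd, hm 2 n, hm 2 (n - 2)] at h
    have c1 := pcomm w (2 * j.toNat) 1 n
    rw [show (1 : ℤ) - 1 = 0 from by ring, show (1 : ℤ) + 1 = 2 from by ring,
      show n + 1 + 1 = n + 2 from by ring] at c1
    have c2 := pcomm w (2 * j.toNat) 1 (n - 1)
    rw [show (1 : ℤ) - 1 = 0 from by ring, show (1 : ℤ) + 1 = 2 from by ring,
      show n - 1 + 1 = n from by ring, show n - 1 - 1 = n - 2 from by ring] at c2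
    linear_combination h - w (n + 1) * c1 - w n * c2
  have stepII : ∀ n : ℤ,
      w (n - 1) * (D (w n) - w n * (pAux w (2 * j.toNat) 0 n - pAux w (2 * j.toNat) 0 (n - 1)))
        + w n * (D (w (n - 1)) -
          w (n - 1) * (pAux w (2 * j.toNat) 0 (n - 1) - pAux w (2 * j.toNat) 0 (n - 2))) = 0 := by
    intro n
    have h := h2 n
    rw [hleib, hm 0 n, hm 0 (n - 2)] at h
    linear_combination h
  have main1 : ∀ n : ℤ,
      (w (n + 1) - w n) *
        (D (w n) - w n * (pAux w (2 * j.toNat) 0 n - pAux w (2 * j.toNat) 0 (n - 1))) = 0 := by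
    intro n
    have e1 := stepI n
    have e2 := stepII (n + 1)
    rw [show n + 1 - 1 = n from by ring, show n + 1 - 2 = n - 1 from by ring] at e2
    linear_combination e2 - w n * e1
  constructor
  · intro n
    simp only [hm]
    exact main1 n
  · intro hreg n
    have h0 : (w (n + 1) - w n) *
        (D (w n) - w n * (mCoef w j 0 n - mCoef w j 0 (n - 1))) = 0 := by
      simp only [hm]; exact main1 n
    exact sub_eq_zero.mp (hreg n _ h0)
end
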